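/- arXiv:1808.06411 — 4 statements merged into one kernel-verified Lean document; each statement's English description precedes it below -/
import Mathlib

section
/- Let n ≥ 1 be a natural number, β a type, and f : ZMod n → β a function whose image contains at least two distinct values. Then the number of indices i ∈ ZMod n with f(i) ≠ f(i+1) is at least the number of distinct values in the image of f. (Any assignment of blocks to the nodes of a cycle that uses t ≥ 2 distinct blocks cuts at least t edges of the cycle.) -/
/-! A value `b` of `f` that is not its only value is left somewhere along the cycle: walking
from a node carrying `b` by `+1` steps reaches every node, so some step leaves `b`, and the node
before that step is a cut carrying `b`. Hence `f` maps the set of cuts onto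
its own image. -/

theorem ZMod.forall_of_add_one {n : ℕ} [NeZero n] {P : ZMod n → Prop} {i₀ : ZMod n}
    (h₀ : P i₀) (hsucc : ∀ i, P i → P (i + 1)) (j : ZMod n) : P j := by
  have hwalk : ∀ k : ℕ, P (i₀ + k) := by
    intro k
    induction k with
    | zero => simpa using h₀
    | succ k ih => simpa [add_assoc] using hsucc _ ih
  simpa using hwalk (j - i₀).val

theorem ZMod.exists_cut_of_ne {n : ℕ} [NeZero n] {β : Type*} {f : ZMod n → β}
    {i₀ j : ZMod n} (hne : f j ≠ f i₀) : ∃ i, f i = f i₀ ∧ f i ≠ f (i + 1) := by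
  by_contra! hnocut
  exact hne <| ZMod.forall_of_add_one (P := fun i => f i = f i₀) rfl
    (fun i hi => (hnocut i hi).symm.trans hi) j

/-- Any assignment of blocks to the nodes of a cycle of length `n ≥ 1` that uses
at least two distinct blocks cuts at least as many cycle edges as there are
distinct blocks: the number of indices `i ∈ ZMod n` with `f i ≠ f (i+1)` is at
least the number of distinct values in the image of `f`. -/
theorem cycle_cut_bound (n : ℕ) (hn : 1 ≤ n) {β : Type*} (f : ZMod n → β)
    (htwo : 2 ≤ (Set.range f).ncard) :
    (Set.range f).ncard ≤ {i : ZMod n | f i ≠ f (i + 1)}.ncard := by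
  have : NeZero n := ⟨by omega⟩
  have hsub : Set.range f ⊆ f '' {i : ZMod n | f i ≠ f (i + 1)} := by
    rintro _ ⟨i₀, rfl⟩
    obtain ⟨_, ⟨j, rfl⟩, hne⟩ := Set.exists_ne_of_one_lt_ncard htwo (f i₀)
    obtain ⟨i, hi, hcut⟩ := ZMod.exists_cut_of_ne hne
    exact ⟨i, hcut, hi⟩
  calc (Set.range f).ncard ≤ (f '' {i : ZMod n | f i ≠ f (i + 1)}).ncard :=
        Set.ncard_le_ncard hsub
    _ ≤ {i : ZMod n | f i ≠ f (i + 1)}.ncard := Set.ncard_image_le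
end

section
/- Suppose π cuts no dominant edge, and let g be the induced edge partition. Then the vertex cut of g satisfies Σ_{v ∈ V} (|I(v)| − 1) ≤ |{auxiliary edges {(v,i),(v,i+1)} of the split graph whose two endpoints receive different blocks under π}|. In words: the number of node replicas of the induced edge partition is at most the number of auxiliary edges cut by the node partition of the split graph. -/
open SimpleGraph Finset

/-!
Under `π`, every edge incident to `v` receives the block of the split node of `v` it is
attached to, so `I(v)` is the set of values of the cyclic sequence `i ↦ π (v, i)`. Reading
that sequence along the path `0, 1, …, d v - 1`, every value after the first one that
appears is entered through an auxiliary edge whose endpoints lie in different blocks, and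
distinct path steps give distinct auxiliary edges.
-/

section CyclicSequence

variable {α : Type*} [DecidableEq α]

theorem card_image_range_succ_le (f : ℕ → α) (m : ℕ) :
    #((range (m + 1)).image f) ≤ #{i ∈ range m | f i ≠ f (i + 1)} + 1 := by
  induction m with
  | zero => simp
  | succ m ih =>
    rw [range_add_one] at ih
    rw [range_add_one, image_insert, range_add_one, filter_insert]
    by_cases hstep : f m = f (m + 1)
    · have hmem : f (m + 1) ∈ (insert m (range m)).image f :=
        mem_image.2 ⟨m, mem_insert_self m _, hstep⟩
      simpa [hstep, insert_eq_of_mem hmem] using ih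
    · have hnew : m ∉ {i ∈ range m | f i ≠ f (i + 1)} := by simp
      rw [if_pos hstep, card_insert_of_notMem hnew]
      exact (card_insert_le _ _).trans (by omega)

variable {n : ℕ}

/-- The changes of `f` along the path `0, 1, …, n - 1`; the wrap-around step `n - 1 → 0` is
left out. -/
def cutIndices (f : ZMod n → α) : Finset ℕ := {i ∈ range (n - 1) | f i ≠ f (i + 1)}

theorem ncard_range_le_card_cutIndices_add_one [NeZero n] (f : ZMod n → α) :
    (Set.range f).ncard ≤ #(cutIndices f) + 1 := by
  obtain ⟨m, rfl⟩ : ∃ m, n = m + 1 := ⟨n - 1, (Nat.sub_add_cancel NeZero.one_le).symm⟩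
  have hrange : Set.range f = ↑((range (m + 1)).image fun i : ℕ => f i) := by
    ext c
    simp only [Set.mem_range, coe_image, coe_range, Set.mem_image, Set.mem_Iio]
    constructor
    · rintro ⟨x, rfl⟩
      exact ⟨x.val, ZMod.val_lt x, by rw [ZMod.natCast_zmod_val]⟩
    · rintro ⟨i, -, rfl⟩
      exact ⟨i, rfl⟩
  rw [hrange, Set.ncard_coe_finset]
  simpa [cutIndices] using card_image_range_succ_le (fun i : ℕ => f i) m

theorem injOn_cutIndices (f : ZMod n → α) :
    Set.InjOn (fun i : ℕ => s((i : ZMod n), (i : ZMod n) + 1)) (cutIndices f) := by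
  intro i hi j hj hij
  simp only [cutIndices, coe_filter, mem_range, Set.mem_ofPred_eq] at hi hj
  have hcast {a b : ℕ} (ha : a < n) (hb : b < n) (h : (a : ZMod n) = b) : a = b := by
    simpa [ZMod.natCast_eq_natCast_iff', Nat.mod_eq_of_lt ha, Nat.mod_eq_of_lt hb] using h
  rcases Sym2.eq_iff.1 hij with ⟨h, -⟩ | ⟨h₁, h₂⟩
  · exact hcast (by omega) (by omega) h
  · have := hcast (a := i) (b := j + 1) (by omega) (by omega) (by push_cast; exact h₁)
    have := hcast (a := i + 1) (b := j) (by omega) (by omega) (by push_cast; exact h₂)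
    omega

end CyclicSequence

theorem image_incident_edges_eq_range {V ι β : Type*} {G : SimpleGraph V} {v : V}
    (e : ι ≃ G.neighborSet v) (c : ι → β) (g : G.edgeSet → β)
    (hg : ∀ u (h : G.Adj v u), g ⟨s(v, u), G.mem_edgeSet.2 h⟩ = c (e.symm ⟨u, h⟩)) :
    g '' {ed : G.edgeSet | v ∈ (ed : Sym2 V)} = Set.range c := by
  ext b
  constructor
  · rintro ⟨⟨ed, hed⟩, hv, rfl⟩
    obtain ⟨u, rfl⟩ := Sym2.mem_iff_exists.1 hv
    exact ⟨_, (hg u (G.mem_edgeSet.1 hed)).symm⟩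
  · rintro ⟨i, rfl⟩
    exact ⟨⟨s(v, e i), G.mem_edgeSet.2 (e i).2⟩, Sym2.mem_mk_left _ _,
      (hg _ (e i).2).trans (congrArg c (e.symm_apply_apply i))⟩

theorem sum_card_cutIndices_le_ncard_cut_pairs {V α : Type*} [Fintype V] [DecidableEq α]
    {d : V → ℕ} [∀ v, NeZero (d v)] (f : (Σ v : V, ZMod (d v)) → α) :
    ∑ v, #(cutIndices fun i => f ⟨v, i⟩) ≤
      {p : Sym2 (Σ w : V, ZMod (d w)) |
        ∃ (v : V) (i : ZMod (d v)),
          (⟨v, i⟩ : Σ w : V, ZMod (d w)) ≠ ⟨v, i + 1⟩ ∧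
          p = s((⟨v, i⟩ : Σ w : V, ZMod (d w)), ⟨v, i + 1⟩) ∧
          f ⟨v, i⟩ ≠ f ⟨v, i + 1⟩}.ncard := by
  rw [← card_sigma, ← Set.ncard_coe_finset]
  refine Set.ncard_le_ncard_of_injOn
    (fun x => s((⟨x.1, x.2⟩ : Σ w : V, ZMod (d w)), ⟨x.1, x.2 + 1⟩)) ?_ ?_ (Set.toFinite _)
  · rintro ⟨v, i⟩ hi
    simp only [coe_sigma, Set.mem_sigma_iff, mem_coe, cutIndices, mem_filter] at hi
    exact ⟨v, i, fun h => hi.2.2 (congrArg f h), rfl, hi.2.2⟩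
  · rintro ⟨v, i⟩ hi ⟨w, j⟩ hj hij
    simp only [coe_sigma, Set.mem_sigma_iff, mem_coe] at hi hj
    obtain rfl : v = w := by
      rcases Sym2.eq_iff.1 hij with ⟨h, -⟩ | ⟨h, -⟩ <;> exact congrArg Sigma.fst h
    have hfiber : s((i : ZMod (d v)), (i : ZMod (d v)) + 1) =
        s((j : ZMod (d v)), (j : ZMod (d v)) + 1) :=
      Sym2.map.injective (sigma_mk_injective (β := fun w => ZMod (d w)) (i := v))
        (by simpa only [Sym2.map_mk] using hij)
    rw [injOn_cutIndices _ hi.2 hj.2 hfiber]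

theorem vertex_cut_le_cut_auxiliary_edges_general
    {V : Type*} [Fintype V] (G : SimpleGraph V) [DecidableRel G.Adj]
    (e : ∀ v : V, ZMod (G.degree v) ≃ G.neighborSet v) {k : ℕ}
    (π : (Σ v : V, ZMod (G.degree v)) → Fin k)
    (g : G.edgeSet → Fin k)
    (hg : ∀ u v (h : G.Adj u v),
      g ⟨s(u, v), (G.mem_edgeSet).mpr h⟩ = π ⟨u, (e u).symm ⟨v, h⟩⟩) :
    ∑ v : V, ((g '' {ed : G.edgeSet | v ∈ (ed : Sym2 V)}).ncard - 1) ≤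
      {p : Sym2 (Σ w : V, ZMod (G.degree w)) |
        ∃ (v : V) (i : ZMod (G.degree v)),
          (⟨v, i⟩ : Σ w : V, ZMod (G.degree w)) ≠ ⟨v, i + 1⟩ ∧
          p = s((⟨v, i⟩ : Σ w : V, ZMod (G.degree w)), ⟨v, i + 1⟩) ∧
          π ⟨v, i⟩ ≠ π ⟨v, i + 1⟩}.ncard := by
  have (v : V) : NeZero (G.degree v) :=
    ⟨((G.degree_pos_iff_exists_adj v).2 ⟨_, (e v 0).2⟩).ne'⟩
  calc ∑ v : V, ((g '' {ed : G.edgeSet | v ∈ (ed : Sym2 V)}).ncard - 1)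
      ≤ ∑ v, #(cutIndices fun i => π ⟨v, i⟩) := by
        gcongr with v
        rw [image_incident_edges_eq_range (e v) (fun i => π ⟨v, i⟩) g (hg v)]
        have := ncard_range_le_card_cutIndices_add_one fun i => π ⟨v, i⟩
        omega
    _ ≤ _ := sum_card_cutIndices_le_ncard_cut_pairs π

/-- If a `k`-way node partition `π` of the SPAC split graph of `G` cuts no dominant
edge and `g` is the induced edge partition, then the vertex cut of `g`, i.e. the
number of node replicas `Σ_{v ∈ V} (|I(v)| − 1)`, is at most the number of
auxiliary edges of the split graph cut by `π`. -/
theorem vertex_cut_le_cut_auxiliary_edges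
    {V : Type*} [Fintype V] [DecidableEq V] (G : SimpleGraph V) [DecidableRel G.Adj]
    (e : ∀ v : V, ZMod (G.degree v) ≃ G.neighborSet v) {k : ℕ}
    (π : (Σ v : V, ZMod (G.degree v)) → Fin k)
    (hNoCut : ∀ u v (h : G.Adj u v),
      π ⟨u, (e u).symm ⟨v, h⟩⟩ = π ⟨v, (e v).symm ⟨u, h.symm⟩⟩)
    (g : G.edgeSet → Fin k)
    (hg : ∀ u v (h : G.Adj u v),
      g ⟨s(u, v), (G.mem_edgeSet).mpr h⟩ = π ⟨u, (e u).symm ⟨v, h⟩⟩) :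
    ∑ v : V, ((g '' {ed : G.edgeSet | v ∈ (ed : Sym2 V)}).ncard - 1) ≤
      {p : Sym2 (Σ w : V, ZMod (G.degree w)) |
        ∃ (v : V) (i : ZMod (G.degree v)),
          (⟨v, i⟩ : Σ w : V, ZMod (G.degree w)) ≠ ⟨v, i + 1⟩ ∧
          p = s((⟨v, i⟩ : Σ w : V, ZMod (G.degree w)), ⟨v, i + 1⟩) ∧
          π ⟨v, i⟩ ≠ π ⟨v, i + 1⟩}.ncard :=
  vertex_cut_le_cut_auxiliary_edges_general G e π g hg
end

section
/- Suppose π cuts no dominant edge, and let g be the induced edge partition. Then for every block b ∈ Fin k, twice the number of edges of G assigned to block b by g equals the number of split nodes assigned to block b by π: 2 · |{e ∈ E : g(e) = b}| = |{x ∈ V' : π(x) = b}|. -/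
/-!
Via `(v, i) ↦ (v, e_v i)`, split nodes are exactly the darts (oriented edges) of `G`, and by `hg`
a split node lies in block `b` iff the underlying edge of its dart does. Every edge carries
exactly two darts, so counting darts over the edges of block `b` gives the factor `2`.
-/

open SimpleGraph Finset

namespace SimpleGraph

variable {V : Type*} {G : SimpleGraph V}

def Dart.edgeSetElem (d : G.Dart) : G.edgeSet := ⟨d.edge, d.edge_mem⟩

lemma card_dart_edgeSetElem_fiber [Fintype V] [DecidableRel G.Adj] [DecidableEq V]
    (ed : G.edgeSet) : #{d : G.Dart | d.edgeSetElem = ed} = 2 := by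
  simpa [Dart.edgeSetElem, Subtype.ext_iff] using G.dart_edge_fiber_card ed.1 ed.2

lemma ncard_setOf_dart_edgeSetElem_mem [Fintype V] [DecidableRel G.Adj] (s : Set G.edgeSet) :
    {d : G.Dart | d.edgeSetElem ∈ s}.ncard = 2 * s.ncard := by
  classical
  rw [Set.ncard_eq_toFinset_card', Set.ncard_eq_toFinset_card',
    card_eq_sum_card_fiberwise (f := Dart.edgeSetElem) (t := s.toFinset)
      (fun d hd => by simpa using hd),
    mul_comm, ← smul_eq_mul, ← sum_const]
  refine sum_congr rfl fun ed hed => ?_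
  rw [← card_dart_edgeSetElem_fiber ed]
  congr 1
  ext d
  simp_all

def sigmaNeighborSetEquivDart : (Σ v, G.neighborSet v) ≃ G.Dart where
  toFun x := ⟨(x.1, x.2), x.2.2⟩
  invFun d := ⟨d.fst, d.snd, d.adj⟩

section SplitNodes

variable {ι : V → Type*} (e : ∀ v, ι v ≃ G.neighborSet v)

def splitNodeEquivDart : (Σ v, ι v) ≃ G.Dart :=
  (Equiv.sigmaCongrRight e).trans sigmaNeighborSetEquivDart

@[simp]
lemma splitNodeEquivDart_apply (v : V) (i : ι v) :
    splitNodeEquivDart e ⟨v, i⟩ = ⟨(v, e v i), (e v i).2⟩ := rfl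

end SplitNodes

end SimpleGraph

theorem two_mul_block_edges_eq_block_split_nodes_general
    {V : Type*} [Fintype V] (G : SimpleGraph V) [DecidableRel G.Adj]
    (e : ∀ v : V, ZMod (G.degree v) ≃ G.neighborSet v) {k : ℕ}
    (π : (Σ v : V, ZMod (G.degree v)) → Fin k)
    (g : G.edgeSet → Fin k)
    (hg : ∀ u v (h : G.Adj u v),
      g ⟨s(u, v), (G.mem_edgeSet).mpr h⟩ = π ⟨u, (e u).symm ⟨v, h⟩⟩) :
    ∀ b : Fin k,
      2 * {ed : G.edgeSet | g ed = b}.ncard =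
        {x : Σ w : V, ZMod (G.degree w) | π x = b}.ncard := by
  intro b
  have hπ : ∀ x, π x = g (splitNodeEquivDart e x).edgeSetElem := by
    rintro ⟨v, i⟩
    simpa [Dart.edgeSetElem, Dart.edge] using (hg v (e v i) (e v i).2).symm
  calc 2 * {ed : G.edgeSet | g ed = b}.ncard
      = {d : G.Dart | g d.edgeSetElem = b}.ncard := (ncard_setOf_dart_edgeSetElem_mem _).symm
    _ = (splitNodeEquivDart e ⁻¹' {d : G.Dart | g d.edgeSetElem = b}).ncard :=
      (Set.ncard_preimage_of_injective_subset_range (Equiv.injective _) (by simp)).symm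
    _ = {x : Σ w : V, ZMod (G.degree w) | π x = b}.ncard := by
      simp only [Set.preimage_ofPred_eq, hπ]

/-- If a `k`-way node partition `π` of the SPAC split graph of `G` cuts no dominant
edge and `g` is the induced edge partition, then for every block `b`, twice the
number of edges of `G` assigned to `b` by `g` equals the number of split nodes
assigned to `b` by `π`. -/
theorem two_mul_block_edges_eq_block_split_nodes
    {V : Type*} [Fintype V] [DecidableEq V] (G : SimpleGraph V) [DecidableRel G.Adj]
    (e : ∀ v : V, ZMod (G.degree v) ≃ G.neighborSet v) {k : ℕ}
    (π : (Σ v : V, ZMod (G.degree v)) → Fin k)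
    (hNoCut : ∀ u v (h : G.Adj u v),
      π ⟨u, (e u).symm ⟨v, h⟩⟩ = π ⟨v, (e v).symm ⟨u, h.symm⟩⟩)
    (g : G.edgeSet → Fin k)
    (hg : ∀ u v (h : G.Adj u v),
      g ⟨s(u, v), (G.mem_edgeSet).mpr h⟩ = π ⟨u, (e u).symm ⟨v, h⟩⟩) :
    ∀ b : Fin k,
      2 * {ed : G.edgeSet | g ed = b}.ncard =
        {x : Σ w : V, ZMod (G.degree w) | π x = b}.ncard :=
  two_mul_block_edges_eq_block_split_nodes_general G e π g hg
end

section
/- Suppose π cuts no dominant edge, let g be the induced edge partition, let m = |E|, and suppose π satisfies the node balance constraint |{x ∈ V' : π(x) = b}| ≤ (1+ε)·⌈2m/k⌉ for every block b ∈ Fin k, where ε ≥ 0 is a real number. Then the induced edge partition satisfies |{e ∈ E : g(e) = b}| ≤ (1+ε)·⌈2m/k⌉ / 2 for every block b ∈ Fin k. -/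
/-!
The split node `⟨u, i⟩` is the dart from `u` to `e u i`, and the induced edge partition gives each
dart the block of its edge. So block `b` of `π` consists of exactly the two darts of every edge in
block `b` of `g`, which has therefore half the size of a node block.
-/

namespace SimpleGraph

variable {V : Type*} (G : SimpleGraph V)

def dartEquivSigmaNeighborSet : G.Dart ≃ Σ v, G.neighborSet v where
  toFun d := ⟨d.fst, ⟨d.snd, d.adj⟩⟩
  invFun x := G.dartOfNeighborSet x.1 x.2
  left_inv _ := rfl
  right_inv _ := rfl

theorem ncard_dart_edge_mem [Fintype V] [DecidableRel G.Adj] (S : Set G.edgeSet) :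
    {d : G.Dart | ⟨d.edge, d.edge_mem⟩ ∈ S}.ncard = 2 * S.ncard := by
  classical
  let edge : G.Dart → G.edgeSet := fun d => ⟨d.edge, d.edge_mem⟩
  have fiber_card (ed : G.edgeSet) (hed : ed ∈ S) :
      (({d | edge d ∈ S} : Set G.Dart).toFinset.filter (edge · = ed)).card = 2 := by
    convert G.dart_edge_fiber_card ed.1 ed.2 using 2
    ext d
    simp only [Set.mem_toFinset, Finset.mem_filter, Set.mem_ofPred_eq, Finset.mem_univ, true_and,
      edge, Subtype.ext_iff]
    exact ⟨And.right, fun h => ⟨by convert hed, h⟩⟩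
  rw [Set.ncard_eq_toFinset_card', Set.ncard_eq_toFinset_card',
    Finset.card_eq_sum_card_fiberwise (f := edge) (t := S.toFinset) (fun d hd => by simpa using hd),
    Finset.sum_const_nat fun ed hed => fiber_card ed (Set.mem_toFinset.mp hed), mul_comm]

theorem ncard_block_eq_two_mul_ncard_edge_block [Fintype V] [DecidableRel G.Adj]
    {ι : V → Type*} (e : ∀ v, ι v ≃ G.neighborSet v) {β : Type*} (π : (Σ v, ι v) → β)
    (g : G.edgeSet → β)
    (hg : ∀ u v (h : G.Adj u v), g ⟨s(u, v), G.mem_edgeSet.mpr h⟩ = π ⟨u, (e u).symm ⟨v, h⟩⟩)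
    (b : β) : {x | π x = b}.ncard = 2 * {ed | g ed = b}.ncard := by
  let toSplitNode := G.dartEquivSigmaNeighborSet.trans (Equiv.sigmaCongrRight fun v => (e v).symm)
  have hpre : toSplitNode ⁻¹' {x | π x = b} = {d | ⟨d.edge, d.edge_mem⟩ ∈ {ed | g ed = b}} := by
    ext d
    exact Iff.of_eq (congrArg (· = b) (hg d.fst d.snd d.adj).symm)
  rw [← G.ncard_dart_edge_mem, ← hpre,
    Set.ncard_preimage_of_injective_subset_range toSplitNode.injective (by simp)]

end SimpleGraph

theorem induced_edge_partition_balanced_general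
    {V : Type*} [Fintype V] (G : SimpleGraph V) [DecidableRel G.Adj]
    (e : ∀ v : V, ZMod (G.degree v) ≃ G.neighborSet v) {k : ℕ}
    (π : (Σ v : V, ZMod (G.degree v)) → Fin k)
    (g : G.edgeSet → Fin k)
    (hg : ∀ u v (h : G.Adj u v),
      g ⟨s(u, v), (G.mem_edgeSet).mpr h⟩ = π ⟨u, (e u).symm ⟨v, h⟩⟩)
    (m : ℕ)
    (ε : ℝ)
    (hbal : ∀ b : Fin k,
      ({x : Σ w : V, ZMod (G.degree w) | π x = b}.ncard : ℝ) ≤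
        (1 + ε) * ((⌈(2 * (m : ℝ)) / (k : ℝ)⌉ : ℤ) : ℝ)) :
    ∀ b : Fin k,
      ({ed : G.edgeSet | g ed = b}.ncard : ℝ) ≤
        (1 + ε) * ((⌈(2 * (m : ℝ)) / (k : ℝ)⌉ : ℤ) : ℝ) / 2 := by
  intro b
  have hblock := G.ncard_block_eq_two_mul_ncard_edge_block e π g hg b
  calc ({ed : G.edgeSet | g ed = b}.ncard : ℝ)
      = ({x : Σ w : V, ZMod (G.degree w) | π x = b}.ncard : ℝ) / 2 := by
        rw [hblock]; push_cast; ring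
    _ ≤ _ := by gcongr; exact hbal b

/-- If a `k`-way node partition `π` of the SPAC split graph of `G` cuts no dominant
edge, `g` is the induced edge partition, `m = |E|`, and `π` satisfies the node
balance constraint `|{x : π x = b}| ≤ (1+ε)·⌈2m/k⌉` for every block `b` (split
nodes have unit weight), then the induced edge partition satisfies
`|{e : g e = b}| ≤ (1+ε)·⌈2m/k⌉ / 2` for every block `b`. -/
theorem induced_edge_partition_balanced
    {V : Type*} [Fintype V] [DecidableEq V] (G : SimpleGraph V) [DecidableRel G.Adj]
    (e : ∀ v : V, ZMod (G.degree v) ≃ G.neighborSet v) {k : ℕ}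
    (π : (Σ v : V, ZMod (G.degree v)) → Fin k)
    (hNoCut : ∀ u v (h : G.Adj u v),
      π ⟨u, (e u).symm ⟨v, h⟩⟩ = π ⟨v, (e v).symm ⟨u, h.symm⟩⟩)
    (g : G.edgeSet → Fin k)
    (hg : ∀ u v (h : G.Adj u v),
      g ⟨s(u, v), (G.mem_edgeSet).mpr h⟩ = π ⟨u, (e u).symm ⟨v, h⟩⟩)
    (m : ℕ) (hm : m = G.edgeSet.ncard)
    (ε : ℝ) (hε : 0 ≤ ε)
    (hbal : ∀ b : Fin k,
      ({x : Σ w : V, ZMod (G.degree w) | π x = b}.ncard : ℝ) ≤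
        (1 + ε) * ((⌈(2 * (m : ℝ)) / (k : ℝ)⌉ : ℤ) : ℝ)) :
    ∀ b : Fin k,
      ({ed : G.edgeSet | g ed = b}.ncard : ℝ) ≤
        (1 + ε) * ((⌈(2 * (m : ℝ)) / (k : ℝ)⌉ : ℤ) : ℝ) / 2 :=
  induced_edge_partition_balanced_general G e π g hg m ε hbal
end
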